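/- No infinite Stewart word contains 01010 or 10101 in arithmetic progression: for every infinite sequence 𝐭 over A, there do not exist an index i ≥ 0 and an integer m ≥ 1 such that T(𝐭)[i] = T(𝐭)[i+2m] = T(𝐭)[i+4m], T(𝐭)[i+m] = T(𝐭)[i+3m], and T(𝐭)[i] ≠ T(𝐭)[i+m]. -/

import Mathlib

/-- The alphabet B = {0, 1, ?}. -/
inductive B : Type
  | b0 : B
  | b1 : B
  | bq : B
deriving DecidableEq, Inhabited, Repr

/-- The six Stewart patterns a = 01?, b = 10?, c = 0?1, d = 1?0, e = ?01, f = ?10. -/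
inductive A : Type
  | a : A
  | b : A
  | c : A
  | d : A
  | e : A
  | f : A
deriving DecidableEq, Inhabited, Repr

open B in
/-- The length-3 word over B associated with a Stewart pattern. -/
def pat : A → List B
  | .a => [b0, b1, bq]
  | .b => [b1, b0, bq]
  | .c => [b0, bq, b1]
  | .d => [b1, bq, b0]
  | .e => [bq, b0, b1]
  | .f => [bq, b1, b0]

/-- Replace the occurrences of `?` in the first word, in order,
by the symbols of the second word. -/
def fill : List B → List B → List B
  | [], _ => []
  | B.bq :: rest, s :: ss => s :: fill rest ss
  | B.bq :: rest, [] => B.bq :: fill rest []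
  | x :: rest, ss => x :: fill rest ss

/-- Helper: the finite Stewart word of the *reverse* of `t`. -/
def Trev : List A → List B
  | [] => [B.bq]
  | g :: t => fill (Trev t ++ Trev t ++ Trev t) (pat g)

/-- The finite Stewart word `T(t)`, of length `3 ^ t.length`:
`T(ε) = ?`, and `T(t g)` is obtained from `T(t)T(t)T(t)` by replacing its
three occurrences of `?`, in order, by the three symbols of the pattern `g`. -/
def stewT (t : List A) : List B := Trev t.reverse

/-- The length-`r` prefix of an infinite sequence of Stewart patterns, as a list. -/
def prefT (t : ℕ → A) (r : ℕ) : List A := List.ofFn (fun i : Fin r => t i)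

/-- The infinite Stewart word `T(𝐭)`: its symbol at position `n` is the eventual
value of `T(t_0 ⋯ t_{r-1})[n]` as `r → ∞`. -/
noncomputable def stewInf (t : ℕ → A) (n : ℕ) : B :=
  Classical.epsilon (fun v : B => ∃ R : ℕ, ∀ r ≥ R, (stewT (prefT t r)).getD n B.bq = v)

/-- `w` occurs as a factor of the infinite word `x`. -/
def FactorOf (w : List B) (x : ℕ → B) : Prop :=
  ∃ i : ℕ, ∀ j : ℕ, j < w.length → w.getD j B.bq = x (i + j)

/-- `w` has period `p ≥ 1`: `w[i] = w[i+p]` for all `0 ≤ i < |w| - p`. -/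
def HasPeriod (w : List B) (p : ℕ) : Prop :=
  1 ≤ p ∧ ∀ i : ℕ, i + p < w.length → w.getD i B.bq = w.getD (i + p) B.bq

/-- The least period `per(w)` of a word. -/
noncomputable def leastPeriod (w : List B) : ℕ := sInf {p | HasPeriod w p}

/-- The exponent `exp(w) = |w| / per(w)` of a word. -/
noncomputable def expo (w : List B) : ℝ := (w.length : ℝ) / (leastPeriod w : ℝ)

/-- The Hamming distance between two Stewart patterns: the number of positions
`p ∈ {0,1,2}` at which the length-3 words differ. -/
def ham (g h : A) : ℕ :=
  (Finset.univ.filter fun p : Fin 3 => (pat g).getD p B.bq ≠ (pat h).getD p B.bq).card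

/-- `t` is ultimately periodic. -/
def UltPeriodic (t : ℕ → A) : Prop :=
  ∃ N : ℕ, ∃ p : ℕ, 1 ≤ p ∧ ∀ n ≥ N, t (n + p) = t n

/-- An infinite word `x` is 3-automatic: there is a finite automaton with output,
reading base-3 representations least-significant-digit first (trailing zeros
allowed), computing `x`. -/
def IsThreeAutomatic (x : ℕ → B) : Prop :=
  ∃ (Q : Type) (_ : Finite Q) (δ : Q → Fin 3 → Q) (q0 : Q) (τ : Q → B),
    ∀ (r : ℕ) (e : Fin r → Fin 3),
      τ (List.foldl δ q0 (List.ofFn fun i => e i)) =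
        x (∑ i : Fin r, (e i).val * 3 ^ (i : ℕ))


/-! ### Auxiliary development -/

/-- Position of `?` in `pat g`. -/
def kpos : A → ℕ
  | .a => 2
  | .b => 2
  | .c => 1
  | .d => 1
  | .e => 0
  | .f => 0

lemma kpos_lt (g : A) : kpos g < 3 := by cases g <;> simp [kpos]

lemma pat_getD_kpos (g : A) : (pat g).getD (kpos g) B.bq = B.bq := by
  cases g <;> rfl

lemma pat_getD_ne (g : A) (d : ℕ) (hd : d < 3) (h : d ≠ kpos g) :
    (pat g).getD d B.bq ≠ B.bq := by
  interval_cases d <;> cases g <;> simp_all [pat, kpos]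

/-- Value table for `Trev l` (head of `l` = most significant level). -/
def valL : List A → ℕ → B
  | [], _ => B.bq
  | g :: l, n =>
    if valL l (n % 3 ^ l.length) = B.bq
    then (pat g).getD (n / 3 ^ l.length) B.bq
    else valL l (n % 3 ^ l.length)

/-- Value at depth `r`, peeling least-significant digits. -/
def valF : ℕ → (ℕ → A) → ℕ → B
  | 0, _, _ => B.bq
  | r + 1, t, n =>
    if n % 3 = kpos (t 0) then valF r (fun i => t (i + 1)) (n / 3)
    else (pat (t 0)).getD (n % 3) B.bq

lemma fill_nil (w : List B) : fill w [] = w := by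
  induction w with
  | nil => rfl
  | cons x rest ih => cases x <;> simp [fill, ih]

lemma fill_length (w s : List B) : (fill w s).length = w.length := by
  induction w generalizing s with
  | nil => rfl
  | cons x rest ih =>
    cases x <;> cases s <;> simp [fill, ih]

lemma fill_append (u v s : List B) :
    fill (u ++ v) s = fill u (s.take (u.count B.bq)) ++ fill v (s.drop (u.count B.bq)) := by
  induction u generalizing s with
  | nil => simp [fill]
  | cons x rest ih =>
    cases x <;> cases s <;>
      simp [fill, ih, List.count_cons, fill_nil] <;> rfl

lemma getD_ne_bq_of_count_zero (w : List B) (h : w.count B.bq = 0) (n : ℕ)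
    (hn : n < w.length) : w.getD n B.bq ≠ B.bq := by
  have hmem : B.bq ∉ w := by
    rw [← List.count_pos_iff]; omega
  rw [List.getD_eq_getElem w _ hn]
  intro hc
  exact hmem (hc ▸ List.getElem_mem hn)

lemma fill_single_count (w : List B) (x : B) (h : w.count B.bq = 1) :
    (fill w [x]).count B.bq = if x = B.bq then 1 else 0 := by
  induction w with
  | nil => simp at h
  | cons y rest ih =>
    cases y with
    | bq =>
      have h0 : rest.count B.bq = 0 := by simpa [List.count_cons] using h
      simp [fill, fill_nil, List.count_cons, h0]
    | b0 =>
      have h1 : rest.count B.bq = 1 := by simpa [List.count_cons] using h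
      simp [fill, List.count_cons, ih h1]
    | b1 =>
      have h1 : rest.count B.bq = 1 := by simpa [List.count_cons] using h
      simp [fill, List.count_cons, ih h1]

lemma fill_single_getD (w : List B) (x : B) (h : w.count B.bq = 1) (n : ℕ)
    (hn : n < w.length) :
    (fill w [x]).getD n B.bq =
      if w.getD n B.bq = B.bq then x else w.getD n B.bq := by
  induction w generalizing n with
  | nil => simp at hn
  | cons y rest ih =>
    cases y with
    | bq =>
      have h0 : rest.count B.bq = 0 := by simpa [List.count_cons] using h
      cases n with
      | zero => simp [fill, fill_nil]
      | succ k =>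
        have hk : k < rest.length := by simpa using hn
        have hne := getD_ne_bq_of_count_zero rest h0 k hk
        simp only [fill, fill_nil, List.getD_cons_succ]
        rw [if_neg hne]
    | b0 =>
      have h1 : rest.count B.bq = 1 := by simpa [List.count_cons] using h
      cases n with
      | zero => simp [fill]
      | succ k =>
        have hk : k < rest.length := by simpa using hn
        simpa [fill] using ih h1 k hk
    | b1 =>
      have h1 : rest.count B.bq = 1 := by simpa [List.count_cons] using h
      cases n with
      | zero => simp [fill]
      | succ k =>
        have hk : k < rest.length := by simpa using hn
        simpa [fill] using ih h1 k hk

lemma pat_eq (g : A) :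
    pat g = [(pat g).getD 0 B.bq, (pat g).getD 1 B.bq, (pat g).getD 2 B.bq] := by
  cases g <;> rfl

lemma pat_count (g : A) : (pat g).count B.bq = 1 := by cases g <;> rfl

lemma Trev_length (l : List A) : (Trev l).length = 3 ^ l.length := by
  induction l with
  | nil => rfl
  | cons g l ih =>
    simp [Trev, fill_length, ih, pow_succ]
    ring

lemma Trev_count (l : List A) : (Trev l).count B.bq = 1 := by
  induction l with
  | nil => rfl
  | cons g l ih =>
    rw [Trev, pat_eq g]
    rw [show Trev l ++ Trev l ++ Trev l = Trev l ++ (Trev l ++ Trev l) by simp,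
      fill_append, ih]
    simp only [List.take, List.drop]
    rw [fill_append, ih]
    simp only [List.take, List.drop, List.count_append]
    rw [fill_single_count _ _ ih, fill_single_count _ _ ih, fill_single_count _ _ ih]
    have := pat_count g
    rw [pat_eq g] at this
    simp only [List.count_cons, List.count_nil] at this
    by_cases e0 : (pat g).getD 0 B.bq = B.bq <;>
      by_cases e1 : (pat g).getD 1 B.bq = B.bq <;>
        by_cases e2 : (pat g).getD 2 B.bq = B.bq <;>
          simp_all <;> omega

lemma Trev_getD (l : List A) (n : ℕ) (hn : n < 3 ^ l.length) :
    (Trev l).getD n B.bq = valL l n := by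
  induction l generalizing n with
  | nil =>
    have h0 : n = 0 := by simp at hn; omega
    subst h0
    rfl
  | cons g l ih =>
    have hlen : (Trev l).length = 3 ^ l.length := Trev_length l
    have hcnt := Trev_count l
    have hE : 0 < 3 ^ l.length := Nat.pow_pos (by norm_num)
    have hn3 : n < 3 * 3 ^ l.length := by
      have : (3 : ℕ) ^ (g :: l).length = 3 ^ l.length * 3 := by
        simp [pow_succ]
      omega
    rw [Trev, pat_eq g]
    rw [show Trev l ++ Trev l ++ Trev l = Trev l ++ (Trev l ++ Trev l) by simp,
      fill_append, hcnt]
    simp only [List.take, List.drop]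
    rw [fill_append, hcnt]
    simp only [List.take, List.drop]
    -- now : fill T [p0] ++ (fill T [p1] ++ fill T [p2])
    have hfl : ∀ x : B, (fill (Trev l) [x]).length = 3 ^ l.length := by
      intro x; rw [fill_length, hlen]
    have key : ∀ x : B, ∀ k < 3 ^ l.length,
        (fill (Trev l) [x]).getD k B.bq =
          if valL l k = B.bq then x else valL l k := by
      intro x k hk
      rw [fill_single_getD _ _ hcnt k (by omega), ih k hk]
    rcases Nat.lt_or_ge n (3 ^ l.length) with h0 | h0
    · rw [List.getD_append _ _ _ _ (by rw [hfl]; omega)]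
      have hd : n / 3 ^ l.length = 0 := Nat.div_eq_of_lt h0
      have hm : n % 3 ^ l.length = n := Nat.mod_eq_of_lt h0
      rw [key _ n h0, valL]
      rw [hd, hm]
    · rw [List.getD_append_right _ _ _ _ (by rw [hfl]; omega)]
      rw [hfl]
      rcases Nat.lt_or_ge n (2 * 3 ^ l.length) with h1 | h1
      · rw [List.getD_append _ _ _ _ (by rw [hfl]; omega)]
        have hd : n / 3 ^ l.length = 1 := by
          rw [Nat.div_eq_of_lt_le] <;> omega
        have hm : n % 3 ^ l.length = n - 3 ^ l.length := by
          conv_lhs => rw [show n = (n - 3 ^ l.length) + 1 * 3 ^ l.length by omega]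
          rw [Nat.add_mul_mod_self_right, Nat.mod_eq_of_lt (by omega)]
        rw [key _ (n - 3 ^ l.length) (by omega), valL]
        rw [hd, hm]
      · rw [List.getD_append_right _ _ _ _ (by rw [hfl]; omega)]
        rw [hfl]
        have hd : n / 3 ^ l.length = 2 := by
          rw [Nat.div_eq_of_lt_le] <;> omega
        have hm : n % 3 ^ l.length = n - 2 * 3 ^ l.length := by
          conv_lhs => rw [show n = (n - 2 * 3 ^ l.length) + 2 * 3 ^ l.length by omega]
          rw [Nat.add_mul_mod_self_right, Nat.mod_eq_of_lt (by omega)]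
        rw [show n - 3 ^ l.length - 3 ^ l.length = n - 2 * 3 ^ l.length by omega]
        rw [key _ (n - 2 * 3 ^ l.length) (by omega), valL]
        rw [hd, hm]

lemma valL_ne_bq (g : A) (d : ℕ) (hd : d < 3) (h : d ≠ kpos g) :
    (pat g).getD d B.bq ≠ B.bq := pat_getD_ne g d hd h

lemma valL_append (l : List A) (g : A) (n : ℕ) (hn : n < 3 ^ (l.length + 1)) :
    valL (l ++ [g]) n =
      if n % 3 = kpos g then valL l (n / 3) else (pat g).getD (n % 3) B.bq := by
  induction l generalizing n with
  | nil =>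
    have h3 : n < 3 := by simpa using hn
    have hm : n % 3 = n := Nat.mod_eq_of_lt h3
    have e : valL ([] ++ [g]) n = (pat g).getD n B.bq := by
      show (if valL [] (n % 3 ^ ([] : List A).length) = B.bq
        then (pat g).getD (n / 3 ^ ([] : List A).length) B.bq
        else valL [] (n % 3 ^ ([] : List A).length)) = _
      simp [valL]
    rw [e, hm]
    by_cases hk : n = kpos g
    · rw [if_pos hk, hk, pat_getD_kpos]
      show _ = valL [] (kpos g / 3)
      rfl
    · rw [if_neg hk]
  | cons h l ih =>
    have hL : (l ++ [g]).length = l.length + 1 := by simp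
    set E := 3 ^ l.length with hEdef
    have hE : 0 < E := Nat.pow_pos (by norm_num)
    have hmod : n % 3 ^ (l.length + 1) % 3 = n % 3 := by
      rw [Nat.mod_mod_of_dvd]
      exact ⟨3 ^ l.length, by ring⟩
    have harith1 : n % 3 ^ (l.length + 1) / 3 = n / 3 % E := by
      rw [show (3:ℕ) ^ (l.length + 1) = 3 * E by rw [pow_succ]; ring]
      exact Nat.mod_mul_right_div_self n 3 E
    have harith2 : n / 3 ^ (l.length + 1) = n / 3 / E := by
      rw [Nat.div_div_eq_div_mul, pow_succ]
      ring_nf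
      rfl
    have hlt : n % 3 ^ (l.length + 1) < 3 ^ (l.length + 1) :=
      Nat.mod_lt _ (Nat.pow_pos (by norm_num))
    have IH := ih (n % 3 ^ (l.length + 1)) hlt
    show valL (h :: (l ++ [g])) n = _
    rw [valL]
    rw [hL, IH, hmod, harith1]
    by_cases hk : n % 3 = kpos g
    · rw [if_pos hk, if_pos hk]
      show _ = valL (h :: l) (n / 3)
      rw [valL, harith2]
    · rw [if_neg hk, if_neg hk]
      have hne : (pat g).getD (n % 3) B.bq ≠ B.bq :=
        pat_getD_ne g _ (Nat.mod_lt _ (by norm_num)) hk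
      rw [if_neg hne]

lemma prefT_succ (t : ℕ → A) (r : ℕ) :
    prefT t (r + 1) = t 0 :: prefT (fun i => t (i + 1)) r := by
  simp [prefT, List.ofFn_succ]

lemma prefT_length (t : ℕ → A) (r : ℕ) : (prefT t r).length = r := by
  simp [prefT]

lemma stewT_getD (t : ℕ → A) (r n : ℕ) (hn : n < 3 ^ r) :
    (stewT (prefT t r)).getD n B.bq = valF r t n := by
  induction r generalizing t n with
  | zero =>
    interval_cases n
    rfl
  | succ r ih =>
    have hrev : (prefT t (r + 1)).reverse
        = (prefT (fun i => t (i + 1)) r).reverse ++ [t 0] := by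
      rw [prefT_succ]; simp
    have hlen : ((prefT (fun i => t (i + 1)) r).reverse).length = r := by
      simp [prefT_length]
    have hlen2 : ((prefT t (r + 1)).reverse).length = r + 1 := by
      simp [prefT_length]
    rw [stewT, Trev_getD _ n (by rw [hlen2]; exact hn), hrev,
      valL_append _ _ _ (by rw [hlen]; exact hn)]
    rw [valF]
    by_cases hk : n % 3 = kpos (t 0)
    · rw [if_pos hk, if_pos hk]
      have hdiv : n / 3 < 3 ^ r := by
        have h1 : n / 3 ≤ n / 1 := by
          apply Nat.div_le_div_left <;> omega
        rcases Nat.lt_or_ge (n / 3) (3 ^ r) with h | h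
        · exact h
        · exfalso
          have : 3 * (3 ^ r) ≤ 3 * (n / 3) := by omega
          have h2 : 3 * (n / 3) ≤ n := Nat.mul_div_le n 3
          have h3 : (3:ℕ) ^ (r + 1) = 3 * 3 ^ r := by rw [pow_succ]; ring
          omega
      rw [← ih (fun i => t (i + 1)) (n / 3) hdiv]
      rw [stewT, Trev_getD _ _ (by rw [hlen]; exact hdiv)]
    · rw [if_neg hk, if_neg hk]

lemma valF_succ (r : ℕ) (t : ℕ → A) (n : ℕ) :
    valF (r + 1) t n = if n % 3 = kpos (t 0) then valF r (fun i => t (i + 1)) (n / 3)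
      else (pat (t 0)).getD (n % 3) B.bq := rfl

lemma valF_step (r : ℕ) (t : ℕ → A) (n : ℕ) (h : valF r t n ≠ B.bq) :
    valF (r + 1) t n = valF r t n := by
  induction r generalizing t n with
  | zero => simp [valF] at h
  | succ r ih =>
    rw [valF_succ (r + 1) t n, valF_succ r t n]
    by_cases hk : n % 3 = kpos (t 0)
    · rw [if_pos hk, if_pos hk]
      apply ih
      rw [valF_succ r t n, if_pos hk] at h
      exact h
    · rw [if_neg hk, if_neg hk]

lemma valF_mono (r r' : ℕ) (t : ℕ → A) (n : ℕ) (hr : r ≤ r')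
    (h : valF r t n ≠ B.bq) : valF r' t n = valF r t n := by
  induction r' with
  | zero =>
    have : r = 0 := by omega
    rw [this]
  | succ r' ih =>
    rcases Nat.lt_or_ge r (r' + 1) with hlt | hge
    · have h1 : valF r' t n = valF r t n := ih (by omega)
      rw [valF_step r' t n (by rw [h1]; exact h), h1]
    · have : r = r' + 1 := by omega
      rw [this]

lemma n_lt_pow (n r : ℕ) (h : n < r) : n < 3 ^ r := by
  calc n < r := h
    _ < 3 ^ r := Nat.lt_pow_self (by norm_num : 1 < 3)

lemma eventual_exists (t : ℕ → A) (n : ℕ) :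
    ∃ v : B, ∃ R : ℕ, ∀ r ≥ R, (stewT (prefT t r)).getD n B.bq = v := by
  by_cases h : ∃ r, valF r t n ≠ B.bq
  · obtain ⟨r0, hr0⟩ := h
    refine ⟨valF r0 t n, max r0 (n + 1), fun r hr => ?_⟩
    have h1 : n < 3 ^ r := n_lt_pow n r (by omega)
    rw [stewT_getD t r n h1]
    exact valF_mono r0 r t n (by omega) hr0
  · push_neg at h
    refine ⟨B.bq, n + 1, fun r hr => ?_⟩
    have h1 : n < 3 ^ r := n_lt_pow n r (by omega)
    rw [stewT_getD t r n h1, h r]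

lemma stewInf_eq (t : ℕ → A) (n : ℕ) (v : B)
    (h : ∃ R : ℕ, ∀ r ≥ R, (stewT (prefT t r)).getD n B.bq = v) :
    stewInf t n = v := by
  have hex : ∃ w : B, ∃ R : ℕ, ∀ r ≥ R, (stewT (prefT t r)).getD n B.bq = w := ⟨v, h⟩
  have hspec := Classical.epsilon_spec hex
  obtain ⟨R1, h1⟩ := hspec
  obtain ⟨R2, h2⟩ := h
  have e1 := h1 (max R1 R2) (le_max_left _ _)
  have e2 := h2 (max R1 R2) (le_max_right _ _)
  unfold stewInf
  rw [← e1]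
  exact e2

lemma stewInf_L1 (t : ℕ → A) (n : ℕ) (h : n % 3 ≠ kpos (t 0)) :
    stewInf t n = (pat (t 0)).getD (n % 3) B.bq := by
  apply stewInf_eq
  refine ⟨n + 1, fun r hr => ?_⟩
  have h1 : n < 3 ^ r := n_lt_pow n r (by omega)
  rw [stewT_getD t r n h1]
  obtain ⟨r', rfl⟩ : ∃ r', r = r' + 1 := ⟨r - 1, by omega⟩
  rw [valF, if_neg h]

lemma stewInf_L2 (t : ℕ → A) (n : ℕ) (h : n % 3 = kpos (t 0)) :
    stewInf t n = stewInf (fun i => t (i + 1)) (n / 3) := by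
  obtain ⟨v, R, hv⟩ := eventual_exists (fun i => t (i + 1)) (n / 3)
  have h2 : stewInf (fun i => t (i + 1)) (n / 3) = v := stewInf_eq _ _ _ ⟨R, hv⟩
  have h1 : stewInf t n = v := by
    apply stewInf_eq
    refine ⟨max (R + 1) (n + 1), fun r hr => ?_⟩
    have hn : n < 3 ^ r := n_lt_pow n r (by omega)
    obtain ⟨r', rfl⟩ : ∃ r', r = r' + 1 := ⟨r - 1, by omega⟩
    rw [stewT_getD t _ n hn, valF, if_pos h]
    have hd : n / 3 < 3 ^ r' := by
      have h3 : (3:ℕ) ^ (r' + 1) = 3 * 3 ^ r' := by rw [pow_succ]; ring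
      have h2' : 3 * (n / 3) ≤ n := Nat.mul_div_le n 3
      rcases Nat.lt_or_ge (n / 3) (3 ^ r') with hlt | hge
      · exact hlt
      · exfalso; nlinarith [hge]
    rw [← stewT_getD (fun i => t (i + 1)) r' (n / 3) hd]
    exact hv r' (by omega)
  rw [h1, h2]

lemma noAP : ∀ m : ℕ, 1 ≤ m → ∀ (t : ℕ → A) (i : ℕ),
    ¬ (stewInf t i = stewInf t (i + 2 * m) ∧ stewInf t i = stewInf t (i + 4 * m) ∧
       stewInf t (i + m) = stewInf t (i + 3 * m) ∧ stewInf t i ≠ stewInf t (i + m)) := by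
  intro m
  induction m using Nat.strong_induction_on with
  | _ m IH =>
    intro hm t i hcon
    obtain ⟨h2, h4, h13, hne⟩ := hcon
    have hk3 := kpos_lt (t 0)
    by_cases h3 : 3 ∣ m
    · obtain ⟨m₁, rfl⟩ := h3
      have hm₁ : 1 ≤ m₁ := by omega
      by_cases hk : i % 3 = kpos (t 0)
      · -- descend
        have e0 : stewInf t i = stewInf (fun j => t (j + 1)) (i / 3) := stewInf_L2 t i hk
        have e1 : stewInf t (i + 3 * m₁) = stewInf (fun j => t (j + 1)) (i / 3 + m₁) := by
          rw [stewInf_L2 t _ (by omega)]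
          congr 1
          omega
        have e2 : stewInf t (i + 2 * (3 * m₁)) = stewInf (fun j => t (j + 1)) (i / 3 + 2 * m₁) := by
          rw [stewInf_L2 t _ (by omega)]
          congr 1
          omega
        have e3 : stewInf t (i + 3 * (3 * m₁)) = stewInf (fun j => t (j + 1)) (i / 3 + 3 * m₁) := by
          rw [stewInf_L2 t _ (by omega)]
          congr 1
          omega
        have e4 : stewInf t (i + 4 * (3 * m₁)) = stewInf (fun j => t (j + 1)) (i / 3 + 4 * m₁) := by
          rw [stewInf_L2 t _ (by omega)]
          congr 1
          omega
        apply IH m₁ (by omega) hm₁ (fun j => t (j + 1)) (i / 3)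
        refine ⟨?_, ?_, ?_, ?_⟩
        · rw [← e0, ← e2]; exact h2
        · rw [← e0, ← e4]; exact h4
        · rw [← e1, ← e3]
          have : i + 3 * m₁ = i + 1 * (3 * m₁) := by ring
          have h13' := h13
          rw [show i + 3 * m₁ = i + 3 * m₁ from rfl]
          convert h13 using 2 <;> ring
        · rw [← e0, ← e1]
          intro hcontra
          exact hne (by rw [show i + 3 * m₁ = i + 3 * m₁ from rfl] at hcontra; exact hcontra)
      · -- all five values are equal, contradiction
        have e0 : stewInf t i = (pat (t 0)).getD (i % 3) B.bq := stewInf_L1 t i hk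
        have e1 : stewInf t (i + 3 * m₁) = (pat (t 0)).getD (i % 3) B.bq := by
          rw [stewInf_L1 t _ (by omega)]
          congr 1
          omega
        exact hne (by rw [e0, e1])
    · -- 3 ∤ m : pick s ∈ {0,1} with residue ≠ kpos
      have hcases : i % 3 ≠ kpos (t 0) ∨ (i + m) % 3 ≠ kpos (t 0) := by omega
      rcases hcases with hs | hs
      · -- stewInf t i = stewInf t (i + 3m)
        have e0 : stewInf t i = (pat (t 0)).getD (i % 3) B.bq := stewInf_L1 t i hs
        have e3 : stewInf t (i + 3 * m) = (pat (t 0)).getD (i % 3) B.bq := by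
          rw [stewInf_L1 t _ (by omega)]
          congr 1
          omega
        have : stewInf t i = stewInf t (i + 3 * m) := by rw [e0, e3]
        rw [← h13] at this
        exact hne this
      · have e1 : stewInf t (i + m) = (pat (t 0)).getD ((i + m) % 3) B.bq := stewInf_L1 t _ hs
        have e4 : stewInf t (i + 4 * m) = (pat (t 0)).getD ((i + m) % 3) B.bq := by
          rw [stewInf_L1 t _ (by omega)]
          congr 1
          omega
        have : stewInf t (i + m) = stewInf t (i + 4 * m) := by rw [e1, e4]
        rw [← h4] at this
        exact hne this.symm

theorem stmt_18 (t : ℕ → A) :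
    ¬ ∃ (i m : ℕ), 1 ≤ m ∧
      stewInf t i = stewInf t (i + 2 * m) ∧
      stewInf t i = stewInf t (i + 4 * m) ∧
      stewInf t (i + m) = stewInf t (i + 3 * m) ∧
      stewInf t i ≠ stewInf t (i + m) := by
  rintro ⟨i, m, hm, h2, h4, h13, hne⟩
  exact noAP m hm t i ⟨h2, h4, h13, hne⟩
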